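/- Let ψ be a conjunction of edge atoms whose graph D_ψ is bipartite with bipartition (A,B), and consider the quantified sentence over C_4 where each variable is quantified by ∃^{≥1} or ∃^{≥2}. Then C_4 satisfies the sentence: Prover wins by offering (subsets of) {0,2} for variables in A and (subsets of) {1,3} for variables in B. Conversely, if D_ψ is not bipartite, C_4 does not satisfy the sentence. -/

import Mathlib

/-- The cycle graph on `ZMod n`: `i` adjacent to `i ± 1`. -/
def cycleGraph (n : ℕ) : SimpleGraph (ZMod n) where
  Adj i j := i ≠ j ∧ (i = j + 1 ∨ j = i + 1)
  symm := by
    constructor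
    intro i j h
    exact ⟨h.1.symm, h.2.symm⟩
  loopless := by
    constructor
    intro i h
    exact h.1 rfl

/-- The counting-quantifier game with position-dependent witness-set sizes `lam`. -/
def qGame {V : Type*} [DecidableEq V] (lam : ℕ → ℕ) (P : List V → Prop) :
    ℕ → List V → Prop
  | 0, l => P l
  | k + 1, l => ∃ S : Finset V, S.card = lam l.length ∧ ∀ v ∈ S, qGame lam P k (l ++ [v])

/-! The vertex parity `a.val.bodd` 2-colours `C_4`, and two vertices are adjacent exactly when
their parities differ. A winning play therefore 2-colours `D_ψ` by parity. Conversely, given a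
2-colouring `c`, Prover offers at position `i` only vertices of parity `c i`; each parity class has
two elements, so offers of size 1 or 2 are always available, and every resulting assignment sends
the edges of `D_ψ` to edges of `C_4`. -/

section qGame

variable {V : Type*} [DecidableEq V] {lam : ℕ → ℕ} {P : List V → Prop}

theorem exists_of_qGame (hlam : ∀ i, 0 < lam i) :
    ∀ {k l}, qGame lam P k l → ∃ l', P l'
  | 0, l, h => ⟨l, h⟩
  | _ + 1, l, ⟨S, hcard, hS⟩ => by
    obtain ⟨v, hv⟩ := Finset.card_pos.mp (hcard ▸ hlam l.length)
    exact exists_of_qGame hlam (hS v hv)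

theorem qGame_of_invariant (G : List V → Prop)
    (hstep : ∀ l, G l → ∃ S : Finset V, S.card = lam l.length ∧ ∀ v ∈ S, G (l ++ [v])) :
    ∀ k l, G l → (∀ l', G l' → l'.length = l.length + k → P l') → qGame lam P k l
  | 0, l, hG, hP => hP l hG rfl
  | k + 1, l, hG, hP => by
    obtain ⟨S, hcard, hS⟩ := hstep l hG
    refine ⟨S, hcard, fun v hv => qGame_of_invariant G hstep k _ (hS v hv) fun l' hl' hlen => ?_⟩
    exact hP l' hl' (by simp only [List.length_append, List.length_singleton] at hlen; omega)

end qGame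

theorem cycleGraph_four_adj_iff {a b : ZMod 4} :
    (cycleGraph 4).Adj a b ↔ a.val.bodd ≠ b.val.bodd := by
  change a ≠ b ∧ (a = b + 1 ∨ b = a + 1) ↔ _
  revert a b
  decide

theorem exists_finset_bodd_eq {n : ℕ} (hn : n ≤ 2) (b : Bool) :
    ∃ S : Finset (ZMod 4), S.card = n ∧ ∀ v ∈ S, v.val.bodd = b := by
  have hfiber : (Finset.univ.filter fun v : ZMod 4 => v.val.bodd = b).card = 2 := by
    cases b <;> decide
  obtain ⟨S, hsub, hcard⟩ := Finset.exists_subset_card_eq (hfiber ▸ hn)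
  exact ⟨S, hcard, fun v hv => (Finset.mem_filter.mp (hsub hv)).2⟩

theorem List.getD_append_singleton_of_lt_succ {α : Type*} {l : List α} {v d : α} {i : ℕ}
    (hi : i < l.length + 1) :
    (l ++ [v]).getD i d = if i < l.length then l.getD i d else v := by
  grind

theorem c4_game_iff_bipartite_general (m : ℕ) (lam : ℕ → ℕ)
    (hlam : ∀ i, lam i = 1 ∨ lam i = 2)
    (E : ℕ → ℕ → Prop)
    (hrange : ∀ i j, E i j → i < m ∧ j < m) :
    qGame lam
      (fun l : List (ZMod 4) => ∀ i j, E i j → (cycleGraph 4).Adj (l.getD i 0) (l.getD j 0))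
      m [] ↔
    ∃ c : ℕ → Bool, ∀ i j, E i j → c i ≠ c j := by
  constructor
  · intro hgame
    obtain ⟨l, hl⟩ := exists_of_qGame (fun i => by rcases hlam i with h | h <;> omega) hgame
    exact ⟨fun i => (l.getD i 0).val.bodd, fun i j hij => cycleGraph_four_adj_iff.mp (hl i j hij)⟩
  · rintro ⟨c, hc⟩
    let Coloured (l : List (ZMod 4)) := ∀ i < l.length, (l.getD i 0).val.bodd = c i
    refine qGame_of_invariant Coloured (fun l hl => ?_) m [] (by simp [Coloured]) ?_
    · obtain ⟨S, hcard, hS⟩ :=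
        exists_finset_bodd_eq (n := lam l.length) (by rcases hlam l.length with h | h <;> omega)
          (c l.length)
      refine ⟨S, hcard, fun v hv i hi => ?_⟩
      rw [List.getD_append_singleton_of_lt_succ (by simpa using hi)]
      split_ifs with h
      · exact hl i h
      · rw [show i = l.length by
          simp only [List.length_append, List.length_singleton] at hi; omega]
        exact hS v hv
    · intro l hl hlen i j hij
      rw [List.length_nil, zero_add] at hlen
      obtain ⟨hi, hj⟩ := hrange i j hij
      rw [cycleGraph_four_adj_iff, hl i (hlen ▸ hi), hl j (hlen ▸ hj)]
      exact hc i j hij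

/-- A `{1,2}`-quantified conjunctive sentence, with conjunction graph `E` on
variables `0,…,m-1`, is true on `C_4` iff `D_ψ` is bipartite. -/
theorem c4_game_iff_bipartite (m : ℕ) (lam : ℕ → ℕ)
    (hlam : ∀ i, lam i = 1 ∨ lam i = 2)
    (E : ℕ → ℕ → Prop) (hsym : ∀ i j, E i j → E j i) (hirr : ∀ i, ¬ E i i)
    (hrange : ∀ i j, E i j → i < m ∧ j < m) :
    qGame lam
      (fun l : List (ZMod 4) => ∀ i j, E i j → (cycleGraph 4).Adj (l.getD i 0) (l.getD j 0))
      m [] ↔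
    ∃ c : ℕ → Bool, ∀ i j, E i j → c i ≠ c j :=
  c4_game_iff_bipartite_general m lam hlam E hrange
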